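/- arXiv:1111.6718 — 4 statements merged into one kernel-verified Lean document; each statement's English description precedes it below -/
import Mathlib

section
/- Let D > 0 be the discriminant of a real quadratic field and A a positive integer with A < √D/2. Then for each residue class [B] in Z/2AZ with B² ≡ D (mod 4A), there exists a unique pair of integers (B, C) with B in the class [B] such that the quadratic form [A,B,C] of discriminant D = B² - 4AC is reduced, i.e., A > 0, B < 0, C < 0, |B| < √D, and √D - |B| < 2A < √D + |B|. -/
noncomputable section

/-- The binary quadratic form `[A,B,C]` is reduced of discriminant `D`. -/
def IsReducedForm (D A B C : ℤ) : Prop :=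
  D = B ^ 2 - 4 * A * C ∧ 0 < A ∧ B < 0 ∧ C < 0 ∧
    ((|B| : ℤ) : ℝ) < Real.sqrt D ∧
    Real.sqrt D - ((|B| : ℤ) : ℝ) < 2 * (A : ℝ) ∧
    2 * (A : ℝ) < Real.sqrt D + ((|B| : ℤ) : ℝ)

/-- The form `[A,B,C]` is primitive. -/
def IsPrimitiveForm (A B C : ℤ) : Prop := Int.gcd A (Int.gcd B C) = 1

/-- The caliber number: the number of reduced primitive forms of discriminant `D`. -/
def caliber (D : ℤ) : ℕ :=
  Nat.card {f : ℤ × ℤ × ℤ //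
    IsReducedForm D f.1 f.2.1 f.2.2 ∧ IsPrimitiveForm f.1 f.2.1 f.2.2}

/-- `rho D A` is the number of classes `[B] ∈ ℤ/2Aℤ` with `B ^ 2 ≡ D (mod 4A)`. -/
def rho (D : ℤ) (A : ℕ) : ℕ :=
  Nat.card {B : ZMod (2 * A) //
    ∃ b : ℤ, (b : ZMod (2 * A)) = B ∧ (4 * (A : ℤ)) ∣ b ^ 2 - D}

/-- The discriminant of the real quadratic field `ℚ(√d)` for `d` squarefree. -/
def disc (d : ℕ) : ℤ := if d % 4 = 1 then (d : ℤ) else 4 * d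

/-- The Kronecker symbol `(D / p)` for a prime `p` (via the Jacobi symbol for odd `p`). -/
def kronecker (D : ℤ) (p : ℕ) : ℤ :=
  if p = 2 then (if D % 8 = 1 then 1 else if D % 8 = 5 then -1 else 0)
  else jacobiSym D p

end

/-! When `2A < √D`, the form `[A,B,C]` of discriminant `D` is reduced exactly when `B` lies in the
open interval `(-√D, 2A - √D)`; negativity of `B` and `C` and the remaining inequalities come for
free. That interval has length `2A`, and its endpoints are irrational when `D` is not a square, so
it contains exactly one integer of each class mod `2A`. Finally `B² ≡ D (mod 4A)` only depends on
`B` mod `2A`, which makes `C = (B² - D) / 4A` an integer. -/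
theorem Int.not_isSquare_sq_mul_of_squarefree {c d : ℤ} (hc : c ≠ 0) (hd : Squarefree d)
    (hd1 : d ≠ 1) : ¬IsSquare (c ^ 2 * d) := by
  rintro ⟨r, hr⟩
  obtain ⟨s, rfl⟩ : c ∣ r := (Int.pow_dvd_pow_iff two_ne_zero).mp ⟨d, by rw [hr, sq]⟩
  have hds : d = s * s := by
    apply mul_left_cancel₀ (pow_ne_zero 2 hc)
    rw [hr]; ring
  exact hd1 (hds ▸ Int.isUnit_mul_self (hd s ⟨1, by rw [hds, mul_one]⟩))

theorem not_isSquare_disc {d : ℕ} (hsf : Squarefree d) (hd : 1 < d) : ¬IsSquare (disc d) := by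
  have hsf' : Squarefree (d : ℤ) := Int.squarefree_natCast.mpr hsf
  have hd1 : (d : ℤ) ≠ 1 := by omega
  unfold disc
  split_ifs
  · simpa using Int.not_isSquare_sq_mul_of_squarefree one_ne_zero hsf' hd1
  · simpa [show (4 : ℤ) = 2 ^ 2 by norm_num] using
      Int.not_isSquare_sq_mul_of_squarefree two_ne_zero hsf' hd1

theorem Int.existsUnique_modEq_mem_Ico (b a : ℤ) {n : ℤ} (hn : 0 < n) :
    ∃! B : ℤ, B ≡ b [ZMOD n] ∧ B ∈ Set.Ico a (a + n) := by
  have key : ∀ B, (B ≡ b [ZMOD n] ∧ B ∈ Set.Ico a (a + n)) ↔ B = toIcoMod hn a b := by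
    intro B
    rw [eq_comm, toIcoMod_eq_iff, and_comm, Int.modEq_iff_dvd]
    refine and_congr_right fun _ => ⟨fun ⟨z, hz⟩ => ⟨z, ?_⟩, fun ⟨z, hz⟩ => ⟨z, ?_⟩⟩
    · rw [smul_eq_mul]; linarith
    · rw [hz, smul_eq_mul]; ring
  simpa only [key] using existsUnique_eq

theorem Int.cast_mem_Ioo_iff_mem_Ico_floor {R : Type*} [Ring R] [LinearOrder R]
    [IsStrictOrderedRing R] [FloorRing R] {x : R} (hx : ∀ m : ℤ, (m : R) ≠ x) (n B : ℤ) :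
    (B : R) ∈ Set.Ioo x (x + n) ↔ B ∈ Set.Ico (⌊x⌋ + 1) (⌊x⌋ + 1 + n) := by
  have hlow : x < B ↔ ⌊x⌋ + 1 ≤ B := by rw [Int.add_one_le_iff, Int.floor_lt]
  have hhigh : (B : R) < x + n ↔ B < ⌊x⌋ + 1 + n := by
    have h : B - n ≤ ⌊x⌋ ↔ ((B - n : ℤ) : R) < x := by
      rw [Int.le_floor, le_iff_eq_or_lt, or_iff_right (hx _)]
    rw [← sub_lt_iff_lt_add, ← Int.cast_sub, ← h]
    omega
  simp only [Set.mem_Ioo, Set.mem_Ico, hlow, hhigh]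

theorem dvd_sq_sub_of_modEq {n B B₀ D : ℤ} (h : B ≡ B₀ [ZMOD 2 * n]) (h₀ : 4 * n ∣ B₀ ^ 2 - D) :
    4 * n ∣ B ^ 2 - D := by
  obtain ⟨t, ht⟩ := Int.modEq_iff_dvd.mp h.symm
  have hB : B = B₀ + 2 * n * t := by linarith
  have hsq : B ^ 2 - D = B₀ ^ 2 - D + 4 * n * (B₀ * t + n * t ^ 2) := by rw [hB]; ring
  rw [hsq]
  exact h₀.add (dvd_mul_right _ _)

theorem isReducedForm_iff_of_two_mul_lt_sqrt {D A B C : ℤ} (hA : 0 < A)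
    (hAD : 2 * (A : ℝ) < √D) :
    IsReducedForm D A B C ↔
      D = B ^ 2 - 4 * A * C ∧ (B : ℝ) ∈ Set.Ioo (-√D) (-√D + (2 * A : ℤ)) := by
  have hA' : (0 : ℝ) < A := by exact_mod_cast hA
  rw [Set.mem_Ioo, Int.cast_mul, Int.cast_two]
  constructor
  · rintro ⟨hdisc, -, hB, -, hlo, hhi, -⟩
    rw [Int.cast_abs, abs_of_neg (Int.cast_lt_zero.mpr hB)] at hlo hhi
    exact ⟨hdisc, by linarith, by linarith⟩
  · rintro ⟨hdisc, hlo, hhi⟩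
    have hB : (B : ℝ) < 0 := by linarith
    have hBD : (B : ℝ) ^ 2 < D := by
      rw [← Real.sq_sqrt (Real.sqrt_pos.mp (by linarith : (0 : ℝ) < √D)).le]
      exact sq_lt_sq' hlo (by linarith)
    have hC : C < 0 := by
      have : (4 * A * C : ℝ) < 0 := by rw [hdisc] at hBD; push_cast at hBD; linarith
      exact_mod_cast neg_of_mul_neg_right this (by positivity)
    refine ⟨hdisc, hA, Int.cast_lt_zero.mp hB, hC, ?_, ?_, ?_⟩ <;>
      rw [Int.cast_abs, abs_of_neg hB] <;> linarith

theorem existsUnique_isReducedForm {D A B₀ : ℤ} (hD : ¬IsSquare D) (hA : 0 < A)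
    (hAD : 2 * (A : ℝ) < √D) (hB₀ : 4 * A ∣ B₀ ^ 2 - D) :
    ∃! BC : ℤ × ℤ, BC.1 ≡ B₀ [ZMOD 2 * A] ∧ IsReducedForm D A BC.1 BC.2 := by
  have hD₀ : 0 ≤ D := by
    have : (0 : ℝ) < A := by exact_mod_cast hA
    exact_mod_cast (Real.sqrt_pos.mp (by linarith : (0 : ℝ) < √D)).le
  have hirr : Irrational √D := (irrational_sqrt_intCast_iff_of_nonneg hD₀).mpr hD
  have hmem := Int.cast_mem_Ioo_iff_mem_Ico_floor (fun m h => hirr.neg.ne_int m h.symm) (2 * A)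
  obtain ⟨B, ⟨hBmod, hBmem⟩, hBuniq⟩ :=
    Int.existsUnique_modEq_mem_Ico B₀ (⌊-√D⌋ + 1) (by positivity : 0 < 2 * A)
  obtain ⟨C, hC⟩ := dvd_sq_sub_of_modEq hBmod hB₀
  have hred : IsReducedForm D A B C :=
    (isReducedForm_iff_of_two_mul_lt_sqrt hA hAD).mpr ⟨by linarith, (hmem B).mpr hBmem⟩
  refine ⟨(B, C), ⟨hBmod, hred⟩, ?_⟩
  rintro ⟨B', C'⟩ ⟨hmod', hred'⟩
  dsimp only at hmod' hred'
  obtain ⟨hdisc', hmem'⟩ := (isReducedForm_iff_of_two_mul_lt_sqrt hA hAD).mp hred'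
  obtain rfl : B' = B := hBuniq B' ⟨hmod', (hmem B').mp hmem'⟩
  have hC' : C' = C := mul_left_cancel₀ (by positivity : 4 * A ≠ 0) (by linarith)
  rw [hC']

theorem stmt0_general (D : ℤ)
    (hfund : ∃ d : ℕ, Squarefree d ∧ 1 < d ∧ D = disc d)
    (A : ℕ) (hA : 0 < A) (hAsmall : (A : ℝ) < Real.sqrt D / 2)
    (B0 : ℤ) (hB0 : (4 * (A : ℤ)) ∣ B0 ^ 2 - D) :
    ∃! BC : ℤ × ℤ, BC.1 ≡ B0 [ZMOD (2 * (A : ℤ))] ∧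
      IsReducedForm D A BC.1 BC.2 := by
  obtain ⟨d, hsf, hd, rfl⟩ := hfund
  exact existsUnique_isReducedForm (not_isSquare_disc hsf hd) (by exact_mod_cast hA)
    (by push_cast; linarith) hB0

theorem stmt0 (D : ℤ) (hD : 0 < D)
    (hfund : ∃ d : ℕ, Squarefree d ∧ 1 < d ∧ D = disc d)
    (A : ℕ) (hA : 0 < A) (hAsmall : (A : ℝ) < Real.sqrt D / 2)
    (B0 : ℤ) (hB0 : (4 * (A : ℤ)) ∣ B0 ^ 2 - D) :
    ∃! BC : ℤ × ℤ, BC.1 ≡ B0 [ZMOD (2 * (A : ℤ))] ∧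
      IsReducedForm D A BC.1 BC.2 :=
  stmt0_general D hfund A hA hAsmall B0 hB0
end

section
/- Let d ≡ 1 (mod 8) be a positive squarefree integer and κ(d) the caliber number of Q(√d). Then 2^(κ(d)+4) > d. -/
/-!
Let `s = ⌊√d⌋` and `2^m ≤ s < 2^(m+1)`, so `d < 4^(m+1)`. Since `d ≡ 1 (mod 8)` there is an odd `r`
with `r² ≡ d` modulo any power of two. For `k < m`, the window `(s - 2^(k+1), s]` contains a
`b ≡ ±r (mod 2^(k+1))`, and then `[2^k, -b, (b² - d)/2^(k+2)]` is a reduced primitive form of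
discriminant `d`. The two signs give different forms except at `k = 0`, so `κ(d) ≥ 2m - 1`.
-/

def reducedPrimitiveForms (D : ℤ) : Set (ℤ × ℤ × ℤ) :=
  {f | IsReducedForm D f.1 f.2.1 f.2.2 ∧ IsPrimitiveForm f.1 f.2.1 f.2.2}

lemma caliber_eq_ncard (D : ℤ) : caliber D = (reducedPrimitiveForms D).ncard := rfl

lemma setOf_isReducedForm_finite (D : ℤ) :
    {f : ℤ × ℤ × ℤ | IsReducedForm D f.1 f.2.1 f.2.2}.Finite := by
  refine (Set.finite_Icc ((-D, -D, -D) : ℤ × ℤ × ℤ) (D, D, D)).subset ?_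
  rintro ⟨A, B, C⟩ ⟨hD, hA, hB, hC, hBsqrt, -, hAsqrt⟩
  dsimp only at *
  have hB2 : B ^ 2 < D := by
    rw [← sq_abs]
    exact_mod_cast (Real.lt_sqrt (by positivity)).mp hBsqrt
  have hA2 : A ^ 2 < D := by
    have : (A : ℝ) < Real.sqrt D := by linarith
    exact_mod_cast (Real.lt_sqrt (by positivity)).mp this
  have hCD : -D ≤ C := by nlinarith
  simp only [Set.mem_Icc, Prod.mk_le_mk]
  refine ⟨⟨by nlinarith, by nlinarith, hCD⟩, by nlinarith, by nlinarith, by nlinarith⟩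

lemma reducedPrimitiveForms_finite (D : ℤ) : (reducedPrimitiveForms D).Finite :=
  (setOf_isReducedForm_finite D).subset fun _ hf => hf.1

lemma isReducedForm_of_window {d s A b : ℤ} (hsd : s ^ 2 < d) (hds : d < (s + 1) ^ 2)
    (hA : 0 < A) (hAs : 2 * A ≤ s) (hsb : s - 2 * A < b) (hbs : b ≤ s) (hdvd : 4 * A ∣ b ^ 2 - d) :
    IsReducedForm d A (-b) ((b ^ 2 - d) / (4 * A)) := by
  have hb : 0 < b := by omega
  have hs0 : (0 : ℝ) ≤ s := by exact_mod_cast (by omega : (0 : ℤ) ≤ s)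
  have hs : (s : ℝ) < Real.sqrt d := (Real.lt_sqrt hs0).mpr (by exact_mod_cast hsd)
  have hs' : Real.sqrt d < s + 1 := (Real.sqrt_lt' (by linarith)).mpr (by exact_mod_cast hds)
  have hbR : (b : ℝ) ≤ s := by exact_mod_cast hbs
  have hsbR : (s : ℝ) + 1 ≤ 2 * A + b := by exact_mod_cast (by omega : s + 1 ≤ 2 * A + b)
  have hAsR : 2 * (A : ℝ) ≤ s := by exact_mod_cast hAs
  have hbR0 : (0 : ℝ) < b := by exact_mod_cast hb
  unfold IsReducedForm
  rw [abs_neg, abs_of_pos hb]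
  refine ⟨?_, hA, by omega, Int.ediv_neg_of_neg_of_pos (by nlinarith) (by omega),
    by linarith, by linarith, by linarith⟩
  linear_combination Int.mul_ediv_cancel' hdvd

lemma isPrimitiveForm_two_pow {B : ℤ} (k : ℕ) (hB : Odd B) (C : ℤ) :
    IsPrimitiveForm (2 ^ k) B C := by
  have h2B : IsCoprime (2 : ℤ) B :=
    (Int.prime_two.coprime_iff_not_dvd).mpr (Int.not_even_iff_odd.mpr hB ∘ even_iff_two_dvd.mpr)
  exact Int.isCoprime_iff_gcd_eq_one.mp
    ((h2B.pow_left).of_isCoprime_of_dvd_right (Int.gcd_dvd_left B C))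

lemma exists_odd_sq_sub_dvd_two_pow {d : ℤ} (hd : d % 8 = 1) (k : ℕ) :
    ∃ r : ℤ, Odd r ∧ 2 ^ (k + 3) ∣ r ^ 2 - d := by
  induction k with
  | zero => exact ⟨1, odd_one, by norm_num; omega⟩
  | succ k ih =>
    obtain ⟨r, ⟨m, hm⟩, t, ht⟩ := ih
    rcases Int.even_or_odd t with ⟨u, hu⟩ | ⟨u, hu⟩
    · exact ⟨r, ⟨m, hm⟩, u, by rw [ht, hu]; ring⟩
    -- Hensel step: `(r + 2^(k+2))² - d = 2^(k+3) (t + r) + 2^(2k+4)` and `t + r` is even.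
    · refine ⟨r + 2 ^ (k + 2), ⟨m + 2 ^ (k + 1), by rw [hm]; ring⟩, u + m + 1 + 2 ^ k, ?_⟩
      linear_combination ht + 2 ^ (k + 3) * hu + 2 ^ (k + 3) * hm

lemma two_pow_add_two_dvd_sq_sub_sq {b r : ℤ} {k : ℕ} (h : 2 ^ (k + 1) ∣ b - r) :
    2 ^ (k + 2) ∣ b ^ 2 - r ^ 2 := by
  obtain ⟨t, ht⟩ := h
  exact ⟨r * t + 2 ^ k * t ^ 2, by linear_combination (b + r + 2 ^ (k + 1) * t) * ht⟩

lemma mem_reducedPrimitiveForms_of_window {d s b r : ℤ} {k : ℕ} (hsd : s ^ 2 < d)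
    (hds : d < (s + 1) ^ 2) (hks : 2 ^ (k + 1) ≤ s) (hsb : s - 2 ^ (k + 1) < b) (hbs : b ≤ s)
    (hbr : 2 ^ (k + 1) ∣ b - r) (hr : Odd r) (hrd : 2 ^ (k + 2) ∣ r ^ 2 - d) :
    (2 ^ k, -b, (b ^ 2 - d) / (4 * 2 ^ k)) ∈ reducedPrimitiveForms d := by
  have hb : Odd b := by
    obtain ⟨t, ht⟩ := hbr
    obtain ⟨u, hu⟩ := hr
    exact ⟨2 ^ k * t + u, by linear_combination ht + hu⟩
  have hdvd : 4 * 2 ^ k ∣ b ^ 2 - d := by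
    have h := dvd_add (two_pow_add_two_dvd_sq_sub_sq hbr) hrd
    rw [sub_add_sub_cancel] at h
    rwa [pow_add, mul_comm] at h
  have h2A : 2 * (2 : ℤ) ^ k = 2 ^ (k + 1) := (pow_succ' 2 k).symm
  exact ⟨isReducedForm_of_window hsd hds (by positivity) (h2A ▸ hks) (h2A ▸ hsb) hbs hdvd,
    isPrimitiveForm_two_pow k hb.neg _⟩

theorem two_mul_sub_one_le_caliber {d : ℕ} (h8 : d % 8 = 1) (hd : ¬ IsSquare d) {m : ℕ}
    (hm : 2 ^ m ≤ Nat.sqrt d) : 2 * m - 1 ≤ caliber d := by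
  set s := Nat.sqrt d
  have hsd : (s : ℤ) ^ 2 < d := by
    have h := Nat.sqrt_le' d
    have hne : s ^ 2 ≠ d := fun h => hd ⟨s, by rw [← h, sq]⟩
    exact_mod_cast lt_of_le_of_ne h hne
  have hds : (d : ℤ) < (s + 1) ^ 2 := by exact_mod_cast Nat.lt_succ_sqrt' d
  obtain ⟨r, hr, hrd⟩ := exists_odd_sq_sub_dvd_two_pow (d := d) (by omega) m
  have hM : ∀ k : ℕ, (0 : ℤ) < 2 ^ (k + 1) := fun k => by positivity
  -- `j` encodes the level `k = |j|` together with the square root `±r` of `d` used at that level.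
  let root (j : ℤ) : ℤ := if j < 0 then -r else r
  let b (j : ℤ) : ℤ := toIocMod (hM j.natAbs) (s - 2 ^ (j.natAbs + 1)) (root j)
  let form (j : ℤ) : ℤ × ℤ × ℤ :=
    (2 ^ j.natAbs, -b j, (b j ^ 2 - d) / (4 * 2 ^ j.natAbs))
  have hb_dvd (j : ℤ) : 2 ^ (j.natAbs + 1) ∣ b j - root j :=
    ⟨-toIocDiv (hM j.natAbs) _ _, by rw [toIocMod_sub_self, smul_eq_mul]; ring⟩
  have hmem : ∀ j ∈ (Finset.Ioo (-(m : ℤ)) m : Set ℤ), form j ∈ reducedPrimitiveForms d := by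
    intro j hj
    rw [Finset.coe_Ioo, Set.mem_Ioo] at hj
    have hjm : j.natAbs < m := by omega
    have hks : (2 : ℤ) ^ (j.natAbs + 1) ≤ s := by
      exact_mod_cast (Nat.pow_le_pow_right two_pos hjm).trans hm
    obtain ⟨hsb, hbs⟩ := toIocMod_mem_Ioc (hM j.natAbs) (s - 2 ^ (j.natAbs + 1)) (root j)
    refine mem_reducedPrimitiveForms_of_window hsd hds hks hsb (by linarith) (hb_dvd j) ?_ ?_
    · dsimp only [root]
      split_ifs
      exacts [hr.neg, hr]
    · have hroot : root j ^ 2 = r ^ 2 := by dsimp only [root]; split_ifs <;> ring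
      rw [hroot]
      exact (pow_dvd_pow 2 (by omega)).trans hrd
  have hinj : Set.InjOn form (Finset.Ioo (-(m : ℤ)) m : Set ℤ) := by
    intro j _ j' _ h
    simp only [form, Prod.mk.injEq, neg_inj] at h
    obtain ⟨hpow, hb, -⟩ := h
    rcases Int.natAbs_eq_natAbs_iff.mp (Int.pow_right_injective (by norm_num) hpow) with h | rfl
    · exact h
    by_contra hj'
    -- `b j'` would be congruent to both `r` and `-r` modulo `2 ^ (|j'| + 1)`, a multiple of 4.
    have h4 : (4 : ℤ) ∣ root j' - root (-j') := by
      have h' := hb_dvd (-j')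
      rw [hb, Int.natAbs_neg] at h'
      have h := dvd_sub h' (hb_dvd j')
      rw [sub_sub_sub_cancel_left] at h
      exact (pow_dvd_pow 2 (by omega : 2 ≤ j'.natAbs + 1)).trans h
    obtain ⟨u, hu⟩ := hr
    dsimp only [root] at h4
    split_ifs at h4 <;> omega
  calc 2 * m - 1 = (Finset.Ioo (-(m : ℤ)) m).card := by rw [Int.card_Ioo]; omega
    _ = (Finset.Ioo (-(m : ℤ)) m : Set ℤ).ncard := (Set.ncard_coe_finset _).symm
    _ ≤ (reducedPrimitiveForms d).ncard :=
      Set.ncard_le_ncard_of_injOn form hmem hinj (reducedPrimitiveForms_finite d)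
    _ = caliber d := (caliber_eq_ncard d).symm

theorem stmt7 (d : ℕ) (hd : Squarefree d) (h8 : d % 8 = 1) :
    (d : ℕ) < 2 ^ (caliber (disc d) + 4) := by
  have hdisc : disc d = d := if_pos (by omega)
  rcases eq_or_ne d 1 with rfl | hd1
  · exact Nat.one_lt_two_pow (by omega)
  have hsq : ¬ IsSquare d := by
    rintro ⟨x, rfl⟩
    rw [Nat.isUnit_iff.mp (hd x dvd_rfl)] at hd1
    exact hd1 rfl
  set s := Nat.sqrt d
  set n := Nat.log 2 s
  have hs0 : s ≠ 0 := Nat.sqrt_eq_zero.not.mpr (by omega)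
  have hcal : 2 * n - 1 ≤ caliber d :=
    two_mul_sub_one_le_caliber h8 hsq (Nat.pow_log_le_self 2 hs0)
  rw [hdisc]
  calc d < (s + 1) ^ 2 := Nat.lt_succ_sqrt' d
    _ ≤ (2 ^ (n + 1)) ^ 2 := Nat.pow_le_pow_left (Nat.lt_pow_succ_log_self one_lt_two s) 2
    _ = 2 ^ (2 * n + 2) := by ring
    _ ≤ 2 ^ (caliber d + 4) := Nat.pow_le_pow_right two_pos (by omega)
end

section
/- Let d = n² + 1 be a squarefree integer with d ≡ 2 (mod 4) and d ≠ 2. Then the ideal [2, √d] = 2Z + √d Z of the ring of integers Z[√d] of Q(√d) is not a principal ideal. -/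
/-!
If `(2, √d) = (g)`, then `N g` divides both `N 2 = 4` and `N √d = -d`, hence divides `2` since
`d ≡ 2 (mod 4)`. `N g = ±1` is impossible because `(2, √d)` is proper (it is the kernel of
`a + b√d ↦ a mod 2`). `N g = ±2` is impossible for `d = n² + 1`: multiplying a solution of
`x² - d y² = ±2` by the unit `√d - n` of norm `-1` gives a solution with smaller `|y|`, and there
is none with `y = 0`.
-/

theorem lt_of_abs_sq_sub_mul_sq_eq_two {n a b : ℤ} (hn : 2 ≤ n) (ha : 0 ≤ a) (hb : 1 ≤ b)
    (h : |a ^ 2 - (n ^ 2 + 1) * b ^ 2| = 2) : n * b < a ∧ a < (n + 1) * b := by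
  have h' := (abs_eq (by norm_num : (0 : ℤ) ≤ 2)).mp h
  constructor
  · by_contra! hle
    have hsq : a ^ 2 ≤ (n * b) ^ 2 := pow_le_pow_left₀ ha hle 2
    have hb1 : b = 1 := by rcases h' with h' | h' <;> nlinarith
    subst hb1
    have : a ≤ n - 1 ∨ a = n := by omega
    rcases this with hlt | rfl
    · have := pow_le_pow_left₀ ha hlt 2
      rcases h' with h' | h' <;> nlinarith
    · rcases h' with h' | h' <;> nlinarith
  · by_contra! hle
    have := pow_le_pow_left₀ (by nlinarith) hle 2
    rcases h' with h' | h' <;> nlinarith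

theorem abs_sq_sub_mul_sq_ne_two {n : ℤ} (hn : 2 ≤ n) (x y : ℤ) :
    |x ^ 2 - (n ^ 2 + 1) * y ^ 2| ≠ 2 := by
  suffices key : ∀ b : ℕ, ∀ a : ℤ, |a ^ 2 - (n ^ 2 + 1) * (b : ℤ) ^ 2| ≠ 2 by
    simpa [Int.natAbs_sq] using key y.natAbs x
  intro b
  induction b using Nat.strong_induction_on with
  | _ b ih =>
    intro a h
    rw [← sq_abs a] at h
    obtain rfl | hb := Nat.eq_zero_or_pos b
    · have ha2 : |a| ^ 2 = 2 := by simpa using h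
      have : |a| ≤ 1 ∨ 2 ≤ |a| := by omega
      rcases this with h1 | h1 <;> nlinarith [abs_nonneg a]
    obtain ⟨hlo, hhi⟩ := lt_of_abs_sq_sub_mul_sq_eq_two hn (abs_nonneg a) (by omega) h
    have hhi' : |a| - n * b < b := by linarith
    refine ih (|a| - n * b).toNat (by omega) (b - n * (|a| - n * b)) ?_
    rw [Int.toNat_of_nonneg (by omega), ← h, ← abs_neg]
    congr 1
    ring

namespace Zsqrtd

theorem span_two_sqrtd_ne_top {d : ℤ} (hd : Even d) :
    Ideal.span ({2, sqrtd} : Set (ℤ√d)) ≠ ⊤ := by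
  let φ : ℤ√d →+* ZMod 2 := lift ⟨0, by simpa using (ZMod.intCast_eq_zero_iff_even.mpr hd).symm⟩
  refine ne_top_of_le_ne_top (RingHom.ker_ne_top φ) ?_
  rw [Ideal.span_le, Set.insert_subset_iff, Set.singleton_subset_iff]
  exact ⟨by simp [φ]; rfl, by simp [φ]⟩

theorem norm_dvd_two_of_dvd {d : ℤ} (hd : d % 4 = 2) {g : ℤ√d} (h2 : g ∣ 2) (hs : g ∣ sqrtd) :
    g.norm ∣ 2 := by
  have hN4 : g.norm ∣ norm 2 := map_dvd normMonoidHom h2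
  have hNd : g.norm ∣ norm sqrtd := map_dvd normMonoidHom hs
  norm_num [norm_def] at hN4 hNd
  rw [show (2 : ℤ) = d - 4 * (d / 4) by omega]
  exact dvd_sub hNd (hN4.mul_right _)

theorem natAbs_norm_ne_two {d n : ℤ} (hd : d = n ^ 2 + 1) (hn : 2 ≤ n) (z : ℤ√d) :
    z.norm.natAbs ≠ 2 := by
  intro h
  apply abs_sq_sub_mul_sq_ne_two hn z.re z.im
  have hnorm : z.re ^ 2 - d * z.im ^ 2 = z.norm := by rw [norm_def]; ring
  rw [← hd, hnorm, Int.abs_eq_natAbs, h]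
  rfl

end Zsqrtd

theorem stmt15_general (n d : ℕ) (hdn : d = n ^ 2 + 1)
    (h4 : d % 4 = 2) (hne : d ≠ 2) :
    ¬ (Ideal.span ({2, Zsqrtd.sqrtd} : Set (Zsqrtd (d : ℤ)))).IsPrincipal := by
  rintro ⟨g, hg⟩
  rw [Ideal.submodule_span_eq] at hg
  have hn : 2 ≤ n := by
    by_contra! hn
    interval_cases n <;> simp_all
  have hdvd : ∀ x ∈ ({2, Zsqrtd.sqrtd} : Set (Zsqrtd (d : ℤ))), g ∣ x := fun x hx =>
    Ideal.mem_span_singleton.mp (hg ▸ Ideal.subset_span hx)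
  have hnorm := Zsqrtd.norm_dvd_two_of_dvd (by omega) (hdvd 2 (by simp)) (hdvd _ (by simp))
  have hunit : ¬ IsUnit g := by
    rw [← Ideal.span_singleton_eq_top]
    exact hg ▸ Zsqrtd.span_two_sqrtd_ne_top (by rw [Int.even_iff]; omega)
  rcases (Nat.dvd_prime Nat.prime_two).mp (Int.natAbs_dvd_natAbs.mpr hnorm) with h | h
  · exact hunit (Zsqrtd.norm_eq_one_iff.mp h)
  · exact Zsqrtd.natAbs_norm_ne_two (by rw [hdn]; push_cast; rfl) (by exact_mod_cast hn) g h

theorem stmt15 (n d : ℕ) (hdn : d = n ^ 2 + 1) (hsf : Squarefree d)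
    (h4 : d % 4 = 2) (hne : d ≠ 2) :
    ¬ (Ideal.span ({2, Zsqrtd.sqrtd} : Set (Zsqrtd (d : ℤ)))).IsPrincipal :=
  stmt15_general n d hdn h4 hne
end

section
/- Let d = n² + 1 be a squarefree integer with d ≡ 1 (mod 8) and d ≠ 17. Then the ideal [2, (1+√d)/2] of the ring of integers Z[(1+√d)/2] of Q(√d) is not a principal ideal. -/
/-!
Put `θ = 2ω - 1`, so that `θ² = d` and `1, θ` is a `ℚ`-basis of `K` in which
`Tr (u + vθ) = 2u` and `N (u + vθ) = u² - d v²`. For `α ∈ 𝓞 K` this gives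
`4 N(α) = T² - d Y²` with `T = Tr α` and `Y = 2v`, an integer because `d Y² ∈ ℤ` and `d` is
squarefree. Both `ω` and `1 - ω` have trace `1`, so neither is divisible by `2`; as `ω² - ω`
is even, `(2, ω)` is then neither the unit ideal nor `(2)`. A generator `α` of it would be a
proper divisor of `2`, hence of norm `±2`, and `T² - (n² + 1) Y² = ±8` would follow.
The congruence forces `4 ∣ n`, and `n ≠ 0, 4` because `|disc K| > 2` and `d ≠ 17`; for `n ≥ 5`
that equation has no solutions, by descent along the unit `√d - n` of norm `-1`.
-/

open Module NumberField

section QuadraticExtension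

variable {F K : Type*} [Field F] [Field K] [Algebra F K] {θ : K}

theorem linearIndependent_one_of_notMem_range (hθ : θ ∉ Set.range (algebraMap F K)) :
    LinearIndependent F ![1, θ] := by
  rw [LinearIndependent.pair_iff' one_ne_zero]
  intro a ha
  exact hθ ⟨a, by rw [Algebra.algebraMap_eq_smul_one, ha]⟩

theorem notMem_range_algebraMap_of_sq_eq {d : F} (hd : ¬IsSquare d)
    (hθ : θ ^ 2 = algebraMap F K d) : θ ∉ Set.range (algebraMap F K) := by
  rintro ⟨a, rfl⟩
  exact hd ⟨a, (algebraMap F K).injective (by rw [← hθ, map_mul, sq])⟩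

noncomputable def quadraticBasis (hK : finrank F K = 2) (hθ : θ ∉ Set.range (algebraMap F K)) :
    Basis (Fin 2) F K :=
  basisOfLinearIndependentOfCardEqFinrank (linearIndependent_one_of_notMem_range hθ)
    (by rw [hK, Fintype.card_fin])

@[simp]
theorem coe_quadraticBasis (hK : finrank F K = 2) (hθ : θ ∉ Set.range (algebraMap F K)) :
    ⇑(quadraticBasis hK hθ) = ![1, θ] :=
  coe_basisOfLinearIndependentOfCardEqFinrank _ _

theorem quadraticBasis_repr (hK : finrank F K = 2) (hθ : θ ∉ Set.range (algebraMap F K))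
    (u v : F) (i : Fin 2) :
    (quadraticBasis hK hθ).repr (algebraMap F K u + v • θ) i = ![u, v] i := by
  set b := quadraticBasis hK hθ
  have hb : algebraMap F K u + v • θ = u • b 0 + v • b 1 := by
    simp [b, Algebra.algebraMap_eq_smul_one]
  rw [hb, map_add, map_smul, map_smul, b.repr_self, b.repr_self]
  fin_cases i <;> simp

theorem exists_eq_algebraMap_add_smul (hK : finrank F K = 2)
    (hθ : θ ∉ Set.range (algebraMap F K)) (x : K) :
    ∃ u v : F, x = algebraMap F K u + v • θ := by
  set b := quadraticBasis hK hθ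
  refine ⟨b.repr x 0, b.repr x 1, ?_⟩
  conv_lhs => rw [← b.sum_repr x]
  simp [b, Fin.sum_univ_two, Algebra.algebraMap_eq_smul_one]

theorem leftMulMatrix_quadraticBasis (hK : finrank F K = 2)
    (hθ : θ ∉ Set.range (algebraMap F K)) {d : F} (hθd : θ ^ 2 = algebraMap F K d) (u v : F) :
    Algebra.leftMulMatrix (quadraticBasis hK hθ) (algebraMap F K u + v • θ) =
      !![u, d * v; v, u] := by
  have hmul : (algebraMap F K u + v • θ) * θ = algebraMap F K (d * v) + u • θ := by
    rw [map_mul, ← hθd, Algebra.smul_def, Algebra.smul_def]; ring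
  ext i j
  rw [Algebra.leftMulMatrix_eq_repr_mul, coe_quadraticBasis]
  fin_cases i <;> fin_cases j <;> simp [-map_add, -map_smul, -map_mul, hmul, quadraticBasis_repr]

theorem trace_algebraMap_add_smul (hK : finrank F K = 2)
    (hθ : θ ∉ Set.range (algebraMap F K)) {d : F} (hθd : θ ^ 2 = algebraMap F K d) (u v : F) :
    Algebra.trace F K (algebraMap F K u + v • θ) = 2 * u := by
  rw [Algebra.trace_eq_matrix_trace (quadraticBasis hK hθ),
    leftMulMatrix_quadraticBasis hK hθ hθd, Matrix.trace_fin_two_of]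
  ring

theorem norm_algebraMap_add_smul (hK : finrank F K = 2)
    (hθ : θ ∉ Set.range (algebraMap F K)) {d : F} (hθd : θ ^ 2 = algebraMap F K d) (u v : F) :
    Algebra.norm F (algebraMap F K u + v • θ) = u ^ 2 - d * v ^ 2 := by
  rw [Algebra.norm_eq_matrix_det (quadraticBasis hK hθ),
    leftMulMatrix_quadraticBasis hK hθ hθd, Matrix.det_fin_two_of]
  ring

end QuadraticExtension

theorem exists_intCast_eq_of_sq_eq_intCast {q : ℚ} {a : ℤ} (h : q ^ 2 = a) : ∃ z : ℤ, q = z := by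
  have hq : IsIntegral ℤ q := .of_pow two_pos (by rw [h]; exact isIntegral_algebraMap (x := a))
  obtain ⟨z, hz⟩ := IsIntegrallyClosed.isIntegral_iff.mp hq
  exact ⟨z, by rw [← hz, algebraMap_int_eq, eq_intCast]⟩

theorem exists_intCast_eq_of_squarefree_mul_sq {d a : ℤ} (hd : Squarefree d) {y : ℚ}
    (h : d * y ^ 2 = a) : ∃ z : ℤ, y = z := by
  obtain ⟨Y, hY⟩ := exists_intCast_eq_of_sq_eq_intCast (q := d * y) (a := d * a)
    (by rw [mul_pow, sq (d : ℚ), mul_assoc, h]; push_cast; ring)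
  obtain ⟨z, rfl⟩ : d ∣ Y := by
    refine (hd.dvd_pow_iff_dvd two_ne_zero).mp ⟨a, ?_⟩
    have : ((Y ^ 2 : ℤ) : ℚ) = ((d * a : ℤ) : ℚ) := by
      push_cast; rw [← hY, ← h]; ring
    exact_mod_cast this
  refine ⟨z, mul_left_cancel₀ (Int.cast_ne_zero.mpr hd.ne_zero) ?_⟩
  rw [hY]; push_cast; ring

theorem not_isSquare_of_squarefree {d : ℤ} (hd : Squarefree d) (hd1 : d ≠ 1) :
    ¬IsSquare (d : ℚ) := by
  rw [Rat.isSquare_intCast_iff]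
  rintro ⟨z, rfl⟩
  rcases Int.isUnit_iff.mp (hd z dvd_rfl) with rfl | rfl <;> simp at hd1

section Pell

variable {N : ℤ}

theorem sq_sub_mul_sq_ne_neg_eight_of_le_two (hN : 5 ≤ N) {x y : ℤ} (hy : 0 < y) (hy2 : y ≤ 2) :
    x ^ 2 - (N ^ 2 + 1) * y ^ 2 ≠ -8 := by
  intro h
  wlog hx : 0 ≤ x generalizing x
  · exact this (by rwa [neg_sq]) (by omega)
  obtain rfl | rfl : y = 1 ∨ y = 2 := by omega
  · have hlt : x < N := by nlinarith
    have hgt : N - 1 < x := by nlinarith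
    omega
  · have hlt : x < 2 * N := by nlinarith
    have hgt : 2 * N - 1 < x := by nlinarith
    omega

/-- `(x, y) ↦ (y - N t, t)` with `t = x - N y` is multiplication of `x + y √(N² + 1)` by the unit
`√(N² + 1) - N` of norm `-1`. -/
theorem pell_eight_descent (hN : 5 ≤ N) {x y c : ℤ} (hx : 0 ≤ x) (hy : 0 < y)
    (hc : c = 8 ∨ c = -8 ∧ 3 ≤ y) (h : x ^ 2 - (N ^ 2 + 1) * y ^ 2 = c) :
    0 < x - N * y ∧ x - N * y < y ∧
      (y - N * (x - N * y)) ^ 2 - (N ^ 2 + 1) * (x - N * y) ^ 2 = -c := by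
  have hNy : N * y < x := by
    have : (N * y) ^ 2 < x ^ 2 := by rcases hc with rfl | ⟨rfl, hy3⟩ <;> nlinarith
    nlinarith
  refine ⟨by linarith, ?_, by linear_combination (-1 : ℤ) * h⟩
  by_contra! hyt
  have hc8 : c ≤ 8 := by omega
  have h1 : y * y ≤ (x - N * y) * (x - N * y) := mul_le_mul hyt hyt hy.le (by linarith)
  have h2 : 1 ≤ y * (x - N * y) := one_le_mul_of_one_le_of_one_le hy (by linarith)
  have h3 : 5 * 1 ≤ N * (y * (x - N * y)) := mul_le_mul hN h2 zero_le_one (by linarith)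
  nlinarith

theorem abs_sq_sub_mul_sq_ne_eight (hN : 5 ≤ N) (x y : ℤ) :
    |x ^ 2 - (N ^ 2 + 1) * y ^ 2| ≠ 8 := by
  induction h : y.natAbs using Nat.strong_induction_on generalizing x y with
  | _ k ih =>
  intro hc
  wlog hxy : 0 ≤ x ∧ 0 ≤ y generalizing x y
  · exact this |x| |y| (by rwa [Int.natAbs_abs]) (by rwa [sq_abs, sq_abs])
      ⟨abs_nonneg x, abs_nonneg y⟩
  obtain ⟨hx, hy⟩ := hxy
  rcases hy.eq_or_lt with rfl | hy
  · have hx8 : x ^ 2 = 8 := by simpa [abs_of_nonneg (sq_nonneg x)] using hc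
    have hlt : x < 3 := by nlinarith
    have hgt : 2 < x := by nlinarith
    omega
  set c := x ^ 2 - (N ^ 2 + 1) * y ^ 2 with hcdef
  by_cases hbase : c = -8 ∧ y ≤ 2
  · exact sq_sub_mul_sq_ne_neg_eight_of_le_two hN hy hbase.2 hbase.1
  have hc' : c = 8 ∨ c = -8 ∧ 3 ≤ y := by
    rcases abs_eq (by norm_num : (0 : ℤ) ≤ 8) |>.mp hc with h8 | h8 <;> omega
  obtain ⟨ht, hty, hnext⟩ := pell_eight_descent hN hx hy hc' hcdef.symm
  exact ih _ (by omega) (y - N * (x - N * y)) (x - N * y) rfl (by rw [hnext, abs_neg, hc])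

end Pell

theorem not_two_dvd_of_odd_trace {S : Type*} [CommRing S] {x : S}
    (h : Odd (Algebra.trace ℤ S x)) : ¬(2 : S) ∣ x := by
  rintro ⟨y, rfl⟩
  rw [← Int.not_even_iff_odd] at h
  exact h ⟨Algebra.trace ℤ S y, by rw [two_mul, map_add]⟩

theorem span_pair_two_ne_top {R : Type*} [CommRing R] {ω : R} (hω : (2 : R) ∣ ω ^ 2 - ω)
    (h1 : ¬(2 : R) ∣ 1 - ω) : Ideal.span {2, ω} ≠ ⊤ := by
  rw [Ne, Ideal.eq_top_iff_one, Ideal.mem_span_pair]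
  rintro ⟨u, v, huv⟩
  obtain ⟨k, hk⟩ := hω
  exact h1 ⟨u * (1 - ω) - v * k, by linear_combination (1 - ω) * huv.symm - v * hk⟩

section RingOfIntegers

variable {K : Type*} [Field K] [NumberField K]

theorem isUnit_iff_isUnit_norm_int {α : 𝓞 K} : IsUnit α ↔ IsUnit (Algebra.norm ℤ α) := by
  rw [NumberField.isUnit_iff_norm, RingOfIntegers.coe_norm, ← Algebra.coe_norm_int,
    Int.isUnit_iff_abs_eq, ← Int.cast_abs]
  exact_mod_cast Iff.rfl

theorem natAbs_norm_eq_two_of_dvd_two (hK : finrank ℚ K = 2) {α : 𝓞 K} (h2 : α ∣ 2)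
    (hu : ¬IsUnit α) (ha : ¬Associated α 2) : (Algebra.norm ℤ α).natAbs = 2 := by
  obtain ⟨β, hβ⟩ := h2
  have hnorm : (Algebra.norm ℤ α).natAbs * (Algebra.norm ℤ β).natAbs = 4 := by
    rw [← Int.natAbs_mul, ← map_mul, ← hβ, ← map_ofNat (algebraMap ℤ (𝓞 K)),
      Algebra.norm_algebraMap, RingOfIntegers.rank, hK]
    rfl
  have hα1 : (Algebra.norm ℤ α).natAbs ≠ 1 := by
    rwa [Ne, ← Int.isUnit_iff_natAbs_eq, ← isUnit_iff_isUnit_norm_int]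
  have hβ1 : (Algebra.norm ℤ β).natAbs ≠ 1 := by
    rw [Ne, ← Int.isUnit_iff_natAbs_eq, ← isUnit_iff_isUnit_norm_int]
    exact fun hβu ↦ ha ⟨hβu.unit, hβ ▸ rfl⟩
  have hdvd : (Algebra.norm ℤ α).natAbs ∣ 4 := Dvd.intro _ hnorm
  have hle : (Algebra.norm ℤ α).natAbs ≤ 4 := Nat.le_of_dvd (by norm_num) hdvd
  interval_cases h : (Algebra.norm ℤ α).natAbs <;> omega

theorem natAbs_norm_eq_two_of_span_eq (hK : finrank ℚ K = 2) {ω α : 𝓞 K}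
    (hω : (2 : 𝓞 K) ∣ ω ^ 2 - ω) (hω0 : ¬(2 : 𝓞 K) ∣ ω) (hω1 : ¬(2 : 𝓞 K) ∣ 1 - ω)
    (hα : Ideal.span {2, ω} = Ideal.span {α}) :
    (Algebra.norm ℤ α).natAbs = 2 := by
  have hmem : ∀ x ∈ ({2, ω} : Set (𝓞 K)), α ∣ x := fun x hx ↦
    Ideal.mem_span_singleton.mp (hα ▸ Ideal.subset_span hx)
  refine natAbs_norm_eq_two_of_dvd_two hK (hmem 2 (by simp)) (fun hu ↦ ?_) (fun h2 ↦ ?_)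
  · exact span_pair_two_ne_top hω hω1 (hα.trans (Ideal.span_singleton_eq_top.mpr hu))
  · have hω2 : ω ∈ Ideal.span {(2 : 𝓞 K)} := by
      rw [← Ideal.span_singleton_eq_span_singleton.mpr h2, ← hα]
      exact Ideal.subset_span (by simp)
    exact hω0 (Ideal.mem_span_singleton.mp hω2)

theorem exists_sq_sub_mul_sq_eq_four_mul_norm (hK : finrank ℚ K = 2) {d : ℤ}
    (hd : Squarefree d) (hd1 : d ≠ 1) {θ : K} (hθ : θ ^ 2 = d) (α : 𝓞 K) :
    ∃ T Y : ℤ, T ^ 2 - d * Y ^ 2 = 4 * Algebra.norm ℤ α := by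
  have hθ' : θ ^ 2 = algebraMap ℚ K d := by rw [hθ, map_intCast]
  have hirr := notMem_range_algebraMap_of_sq_eq (not_isSquare_of_squarefree hd hd1) hθ'
  obtain ⟨u, v, huv⟩ := exists_eq_algebraMap_add_smul hK hirr (α : K)
  have hT : (Algebra.trace ℤ (𝓞 K) α : ℚ) = 2 * u := by
    rw [Algebra.coe_trace_int, huv, trace_algebraMap_add_smul hK hirr hθ']
  have hN : (Algebra.norm ℤ α : ℚ) = u ^ 2 - d * v ^ 2 := by
    rw [Algebra.coe_norm_int, huv, norm_algebraMap_add_smul hK hirr hθ']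
  obtain ⟨Y, hY⟩ := exists_intCast_eq_of_squarefree_mul_sq hd (y := 2 * v)
    (a := Algebra.trace ℤ (𝓞 K) α ^ 2 - 4 * Algebra.norm ℤ α) (by push_cast; rw [hT, hN]; ring)
  refine ⟨Algebra.trace ℤ (𝓞 K) α, Y, ?_⟩
  have : ((Algebra.trace ℤ (𝓞 K) α : ℤ) : ℚ) ^ 2 - d * (Y : ℚ) ^ 2 = 4 * Algebra.norm ℤ α := by
    rw [hT, hN, ← hY]; ring
  exact_mod_cast this

theorem trace_int_eq_one_of_two_mul_sub_one_sq (hK : finrank ℚ K = 2) {d : ℤ}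
    (hd : ¬IsSquare (d : ℚ)) {ω : 𝓞 K} (hω : (2 * (ω : K) - 1) ^ 2 = d) :
    Algebra.trace ℤ (𝓞 K) ω = 1 := by
  have hθ : (2 * (ω : K) - 1) ^ 2 = algebraMap ℚ K d := by rw [hω, map_intCast]
  have hirr := notMem_range_algebraMap_of_sq_eq hd hθ
  have hωθ : (ω : K) = algebraMap ℚ K 2⁻¹ + (2⁻¹ : ℚ) • (2 * (ω : K) - 1) := by
    rw [Algebra.smul_def, map_inv₀, map_ofNat]; field_simp; ring
  have : (Algebra.trace ℤ (𝓞 K) ω : ℚ) = 1 := by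
    rw [Algebra.coe_trace_int, hωθ, trace_algebraMap_add_smul hK hirr hθ]; norm_num
  exact_mod_cast this

theorem not_two_dvd_of_two_mul_sub_one_sq (hK : finrank ℚ K = 2) {d : ℤ}
    (hd : ¬IsSquare (d : ℚ)) {ω : 𝓞 K} (hω : (2 * (ω : K) - 1) ^ 2 = d) : ¬(2 : 𝓞 K) ∣ ω :=
  not_two_dvd_of_odd_trace (by rw [trace_int_eq_one_of_two_mul_sub_one_sq hK hd hω]; exact odd_one)

end RingOfIntegers

theorem stmt16 (n d : ℕ) (hdn : d = n ^ 2 + 1) (hsf : Squarefree d)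
    (h8 : d % 8 = 1) (hne : d ≠ 17)
    (K : Type) [Field K] [NumberField K]
    (hrank : Module.finrank ℚ K = 2)
    (hdisc : NumberField.discr K = (d : ℤ))
    (ω : NumberField.RingOfIntegers K)
    (hω : ω ^ 2 - ω = ((d - 1) / 4 : ℕ)) :
    ¬ (Ideal.span ({2, ω} : Set (NumberField.RingOfIntegers K))).IsPrincipal := by
  rintro ⟨α, hα⟩
  have hd2 : 2 < d := by
    have := NumberField.abs_discr_gt_two (K := K) (by omega)
    rw [hdisc] at this
    exact_mod_cast this
  have hn : 5 ≤ n := by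
    by_contra!
    interval_cases n <;> omega
  obtain ⟨m, hm⟩ : ∃ m, (d - 1) / 4 = 2 * m := ⟨(d - 1) / 8, by omega⟩
  have hdm : ((d : ℤ) : K) = 8 * m + 1 := by
    have : d = 8 * m + 1 := by omega
    rw [this]; push_cast; ring
  have hωK : (ω : K) ^ 2 - ω = 2 * m := by
    have := congrArg ((↑) : 𝓞 K → K) hω
    push_cast [hm] at this
    exact this
  have hsfZ : Squarefree (d : ℤ) := Int.squarefree_natCast.mpr hsf
  have hsq : ¬IsSquare ((d : ℤ) : ℚ) := not_isSquare_of_squarefree hsfZ (by omega)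
  have hθ : (2 * (ω : K) - 1) ^ 2 = ((d : ℤ) : K) := by rw [hdm]; linear_combination 4 * hωK
  have hθ' : (2 * ((1 - ω : 𝓞 K) : K) - 1) ^ 2 = ((d : ℤ) : K) := by
    push_cast at hθ ⊢; linear_combination hθ
  have hN := natAbs_norm_eq_two_of_span_eq hrank ⟨m, by rw [hω, hm]; push_cast; ring⟩
    (not_two_dvd_of_two_mul_sub_one_sq hrank hsq hθ)
    (not_two_dvd_of_two_mul_sub_one_sq hrank hsq hθ')
    (Ideal.submodule_span_eq.symm.trans hα)
  obtain ⟨T, Y, hTY⟩ := exists_sq_sub_mul_sq_eq_four_mul_norm hrank hsfZ (by omega) hθ α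
  apply abs_sq_sub_mul_sq_ne_eight (N := n) (by omega) T Y
  rw [show (n : ℤ) ^ 2 + 1 = d by rw [hdn]; push_cast; ring, hTY, abs_mul,
    abs_of_pos (by norm_num : (0 : ℤ) < 4), Int.abs_eq_natAbs, hN]
  norm_num
end
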